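/- Let K be a nonempty compact convex subset of a real locally convex topological vector space. Let S be a partially ordered additive commutative monoid in which every monotone nondecreasing sequence has a least upper bound. Let d : S → (K → ℝ) be a map such that: each d(x) is a nonnegative lower semicontinuous function on K; d is additive, i.e. d(x + y)(τ) = d(x)(τ) + d(y)(τ) for all x, y ∈ S and τ ∈ K; d is order-preserving, i.e. x ≤ y implies d(x)(τ) ≤ d(y)(τ) for all τ; and d preserves suprema of monotone nondecreasing sequences, i.e. if (x_i) is nondecreasing with least upper bound y in S then d(y)(τ) = sup_i d(x_i)(τ) for all τ ∈ K. Assume strict comparison: whenever x, y ∈ S satisfy d(x)(τ) < d(y)(τ) for all τ ∈ K, then x ≤ y. Assume density: for every continuous affine function f : K → ℝ with f(τ) > 0 for all τ, and every ε > 0, there exists x ∈ S with |f(τ) − d(x)(τ)| < ε for all τ ∈ K. Then for every function g : K → ℝ which is the pointwise supremum of a sequence (f_i) of strictly positive continuous affine functions on K with f_i(τ) < f_{i+1}(τ) for all τ and i, there exists y ∈ S such that d(y)(τ) = g(τ) for all τ ∈ K. -/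

import Mathlib

/-!
Consecutive functions `f i < f (i + 1)` are separated by a uniform gap on the compact set `K`,
so density, applied to their midpoint, yields `x i` with `f i < d (x i) < f (i + 1)` on `K`.
Strict comparison makes `x` increasing; for its supremum `y` the values `d y τ = sup d (x i) τ`
and `g τ = sup f i τ` coincide because the two sequences interlace.
-/

open Set

theorem upperBounds_range_eq_of_interlace {α : Type*} [Preorder α] {a b : ℕ → α}
    (hab : ∀ i, a i ≤ b i) (hba : ∀ i, b i ≤ a (i + 1)) :
    upperBounds (range b) = upperBounds (range a) := by
  ext c
  simp only [mem_upperBounds, forall_mem_range]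
  exact ⟨fun h i => (hab i).trans (h i), fun h i => (hba i).trans (h (i + 1))⟩

theorem IsLUB.range_of_interlace {α : Type*} [Preorder α] {a b : ℕ → α} {c : α}
    (h : IsLUB (range a) c) (hab : ∀ i, a i ≤ b i) (hba : ∀ i, b i ≤ a (i + 1)) :
    IsLUB (range b) c := by
  rwa [IsLUB, upperBounds_range_eq_of_interlace hab hba]

section Affine

variable {V : Type*} [AddCommGroup V] [Module ℝ V] {K : Set V}

def IsAffineOn (K : Set V) (f : V → ℝ) : Prop :=
  ∀ x ∈ K, ∀ y ∈ K, ∀ a b : ℝ, 0 ≤ a → 0 ≤ b → a + b = 1 →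
    f (a • x + b • y) = a * f x + b * f y

theorem IsAffineOn.add_div_two {f g : V → ℝ} (hf : IsAffineOn K f) (hg : IsAffineOn K g) :
    IsAffineOn K fun τ => (f τ + g τ) / 2 := by
  intro x hx y hy a b ha hb hab
  simp only [hf x hx y hy a b ha hb hab, hg x hx y hy a b ha hb hab]
  ring

theorem exists_between_of_dense [TopologicalSpace V] {S : Type*} (hK : IsCompact K)
    (d : S → V → ℝ)
    (hdense : ∀ f : V → ℝ, ContinuousOn f K → IsAffineOn K f → (∀ τ ∈ K, 0 < f τ) →
      ∀ ε : ℝ, 0 < ε → ∃ s : S, ∀ τ ∈ K, |f τ - d s τ| < ε)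
    {f g : V → ℝ} (hfc : ContinuousOn f K) (hgc : ContinuousOn g K)
    (hfa : IsAffineOn K f) (hga : IsAffineOn K g) (hfpos : ∀ τ ∈ K, 0 < f τ)
    (hfg : ∀ τ ∈ K, f τ < g τ) :
    ∃ s : S, ∀ τ ∈ K, f τ < d s τ ∧ d s τ < g τ := by
  obtain ⟨δ, hδ, hgap⟩ := hK.exists_forall_le' (f := fun τ => g τ - f τ) (hgc.sub hfc)
    fun τ hτ => sub_pos.2 (hfg τ hτ)
  obtain ⟨s, hs⟩ := hdense (fun τ => (f τ + g τ) / 2) ((hfc.add hgc).div_const 2)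
    (hfa.add_div_two hga) (fun τ hτ => by linarith [hfpos τ hτ, hfg τ hτ]) (δ / 2) (half_pos hδ)
  refine ⟨s, fun τ hτ => ?_⟩
  have hmid := abs_sub_lt_iff.1 (hs τ hτ)
  have hgapτ := hgap τ hτ
  constructor <;> linarith [hmid.1, hmid.2]

end Affine

theorem stmt3_general {V : Type*} [AddCommGroup V] [Module ℝ V] [TopologicalSpace V]
    (K : Set V) (hKcpt : IsCompact K)
    {S : Type*} [AddCommMonoid S] [PartialOrder S]
    (hlub : ∀ x : ℕ → S, Monotone x → ∃ y : S, IsLUB (Set.range x) y)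
    (d : S → V → ℝ)
    (hsupp : ∀ x : ℕ → S, Monotone x → ∀ y : S, IsLUB (Set.range x) y →
      ∀ τ ∈ K, IsLUB (Set.range fun i : ℕ => d (x i) τ) (d y τ))
    (hsc : ∀ s t : S, (∀ τ ∈ K, d s τ < d t τ) → s ≤ t)
    (hdense : ∀ f : V → ℝ, ContinuousOn f K →
      (∀ x ∈ K, ∀ y ∈ K, ∀ a b : ℝ, 0 ≤ a → 0 ≤ b → a + b = 1 →
        f (a • x + b • y) = a * f x + b * f y) →
      (∀ τ ∈ K, 0 < f τ) →
      ∀ ε : ℝ, 0 < ε → ∃ x : S, ∀ τ ∈ K, |f τ - d x τ| < ε) :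
    ∀ g : V → ℝ,
      (∃ f : ℕ → V → ℝ,
        (∀ i : ℕ, ContinuousOn (f i) K) ∧
        (∀ i : ℕ, ∀ x ∈ K, ∀ y ∈ K, ∀ a b : ℝ, 0 ≤ a → 0 ≤ b → a + b = 1 →
          f i (a • x + b • y) = a * f i x + b * f i y) ∧
        (∀ i : ℕ, ∀ τ ∈ K, 0 < f i τ) ∧
        (∀ i : ℕ, ∀ τ ∈ K, f i τ < f (i + 1) τ) ∧
        (∀ τ ∈ K, IsLUB (Set.range fun i : ℕ => f i τ) (g τ))) →
      ∃ y : S, ∀ τ ∈ K, d y τ = g τ := by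
  rintro g ⟨f, hfc, hfa, hfpos, hfmono, hg⟩
  choose x hx using fun i => exists_between_of_dense hKcpt d hdense (hfc i) (hfc (i + 1))
    (hfa i) (hfa (i + 1)) (hfpos i) (hfmono i)
  have hxmono : Monotone x := monotone_nat_of_le_succ fun i =>
    hsc _ _ fun τ hτ => (hx i τ hτ).2.trans (hx (i + 1) τ hτ).1
  obtain ⟨y, hy⟩ := hlub x hxmono
  refine ⟨y, fun τ hτ => (hsupp x hxmono y hy τ hτ).unique ?_⟩
  exact (hg τ hτ).range_of_interlace (fun i => (hx i τ hτ).1.le) fun i => (hx i τ hτ).2.le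

/-- Let `K` be a nonempty compact convex subset of a real locally convex
topological vector space, `S` a partially ordered additive commutative monoid in which every
monotone nondecreasing sequence has a least upper bound, and `d : S → (V → ℝ)` a map whose
values are nonnegative lower semicontinuous functions on `K`, which is additive,
order-preserving, and preserves suprema of monotone sequences. Assume strict comparison and
density of `{d x}` among strictly positive continuous affine functions. Then every pointwise
supremum `g` of a strictly increasing sequence of strictly positive continuous affine
functions on `K` equals `d y` on `K` for some `y ∈ S`. -/
theorem stmt3 {V : Type*} [AddCommGroup V] [Module ℝ V] [TopologicalSpace V]
    [IsTopologicalAddGroup V] [ContinuousSMul ℝ V] [LocallyConvexSpace ℝ V]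
    (K : Set V) (hKne : K.Nonempty) (hKcpt : IsCompact K) (hKconv : Convex ℝ K)
    {S : Type*} [AddCommMonoid S] [PartialOrder S]
    (hlub : ∀ x : ℕ → S, Monotone x → ∃ y : S, IsLUB (Set.range x) y)
    (d : S → V → ℝ)
    (hnonneg : ∀ s : S, ∀ τ ∈ K, 0 ≤ d s τ)
    (hlsc : ∀ s : S, LowerSemicontinuousOn (d s) K)
    (hadd : ∀ s t : S, ∀ τ ∈ K, d (s + t) τ = d s τ + d t τ)
    (hord : ∀ s t : S, s ≤ t → ∀ τ ∈ K, d s τ ≤ d t τ)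
    (hsupp : ∀ x : ℕ → S, Monotone x → ∀ y : S, IsLUB (Set.range x) y →
      ∀ τ ∈ K, IsLUB (Set.range fun i : ℕ => d (x i) τ) (d y τ))
    (hsc : ∀ s t : S, (∀ τ ∈ K, d s τ < d t τ) → s ≤ t)
    (hdense : ∀ f : V → ℝ, ContinuousOn f K →
      (∀ x ∈ K, ∀ y ∈ K, ∀ a b : ℝ, 0 ≤ a → 0 ≤ b → a + b = 1 →
        f (a • x + b • y) = a * f x + b * f y) →
      (∀ τ ∈ K, 0 < f τ) →
      ∀ ε : ℝ, 0 < ε → ∃ x : S, ∀ τ ∈ K, |f τ - d x τ| < ε) :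
    ∀ g : V → ℝ,
      (∃ f : ℕ → V → ℝ,
        (∀ i : ℕ, ContinuousOn (f i) K) ∧
        (∀ i : ℕ, ∀ x ∈ K, ∀ y ∈ K, ∀ a b : ℝ, 0 ≤ a → 0 ≤ b → a + b = 1 →
          f i (a • x + b • y) = a * f i x + b * f i y) ∧
        (∀ i : ℕ, ∀ τ ∈ K, 0 < f i τ) ∧
        (∀ i : ℕ, ∀ τ ∈ K, f i τ < f (i + 1) τ) ∧
        (∀ τ ∈ K, IsLUB (Set.range fun i : ℕ => f i τ) (g τ))) →
      ∃ y : S, ∀ τ ∈ K, d y τ = g τ :=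
  stmt3_general K hKcpt hlub d hsupp hsc hdense
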